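/- Let Γ be a *-semigroup acting on a nonempty set X, Z an ordered *-space, H a VE-space over Z, and k : X × X → L*(H) a kernel invariant under the action of Γ on X. Suppose that for some fixed α, β, γ ∈ Γ one has k(y, α·x) + k(y, β·x) = k(y, γ·x) for all x, y ∈ X. Then for any minimal Γ-invariant VE-space linearisation (K, π, V) of k, the representation satisfies π(α) + π(β) = π(γ). -/

import Mathlib

noncomputable section

/-- An ordered `*`-space structure on a complex vector space `Z` with involution:
a strict cone of selfadjoint elements. -/
structure StarCone (Z : Type*) [AddCommGroup Z] [Module ℂ Z] [StarAddMonoid Z]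
    [StarModule ℂ Z] where
  pos : Set Z
  zero_mem : (0 : Z) ∈ pos
  add_mem : ∀ {x y : Z}, x ∈ pos → y ∈ pos → x + y ∈ pos
  smul_mem : ∀ {r : ℝ}, 0 ≤ r → ∀ {x : Z}, x ∈ pos → (r : ℂ) • x ∈ pos
  strict : ∀ {x : Z}, x ∈ pos → -x ∈ pos → x = 0
  star_mem : ∀ {x : Z}, x ∈ pos → star x = x

/-- The partial order induced by the cone: `a ≤ b` iff `b - a` is positive. -/
def StarCone.le {Z : Type*} [AddCommGroup Z] [Module ℂ Z] [StarAddMonoid Z] [StarModule ℂ Z]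
    (O : StarCone Z) (a b : Z) : Prop :=
  b - a ∈ O.pos

/-- A VE-space gramian on `E` over the ordered `*`-space `(Z, O)`: linear in the second
variable, Hermitian, positive and definite. -/
structure Gramian {Z : Type*} [AddCommGroup Z] [Module ℂ Z] [StarAddMonoid Z] [StarModule ℂ Z]
    (O : StarCone Z) (E : Type*) [AddCommGroup E] [Module ℂ E] where
  inner : E → E → Z
  add_right : ∀ x y z : E, inner x (y + z) = inner x y + inner x z
  smul_right : ∀ (c : ℂ) (x y : E), inner x (c • y) = c • inner x y
  conj_symm : ∀ x y : E, inner x y = star (inner y x)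
  inner_self_mem : ∀ x : E, inner x x ∈ O.pos
  definite : ∀ x : E, inner x x = 0 → x = 0

/-- A linear map `T` between VE-spaces over the same ordered `*`-space is adjointable if
it has an adjoint `S` with `[T e, f] = [e, S f]`. -/
def Adjointable {Z : Type*} [AddCommGroup Z] [Module ℂ Z] [StarAddMonoid Z] [StarModule ℂ Z]
    {O : StarCone Z} {E F : Type*} [AddCommGroup E] [Module ℂ E] [AddCommGroup F] [Module ℂ F]
    (gE : Gramian O E) (gF : Gramian O F) (T : E →ₗ[ℂ] F) : Prop :=
  ∃ S : F →ₗ[ℂ] E, ∀ (e : E) (f : F), gF.inner (T e) f = gE.inner e (S f)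

/-!
Minimality means the vectors `V x h` span `K`, so a vector of `K` killed by every `V(y)*` is
orthogonal to a spanning set and hence zero. The additivity of the kernel says that
`V(α·x) + V(β·x) - V(γ·x)` is killed by every `V(y)*`, so `V(α·x) + V(β·x) = V(γ·x)`; since
`V(ξ·x) = π(ξ) V(x)`, the maps `π α + π β` and `π γ` agree on the spanning vectors `V x h`.
-/

namespace Gramian

variable {Z : Type*} [AddCommGroup Z] [Module ℂ Z] [StarAddMonoid Z] [StarModule ℂ Z]
  {O : StarCone Z} {E : Type*} [AddCommGroup E] [Module ℂ E]

def innerRight (g : Gramian O E) (x : E) : E →ₗ[ℂ] Z where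
  toFun := g.inner x
  map_add' := g.add_right x
  map_smul' c y := g.smul_right c x y

theorem inner_zero_right (g : Gramian O E) (x : E) : g.inner x 0 = 0 :=
  (g.innerRight x).map_zero

theorem eq_zero_of_inner_eq_zero_of_span_eq_top (g : Gramian O E) {s : Set E}
    (hs : Submodule.span ℂ s = ⊤) {w : E} (h : ∀ u ∈ s, g.inner w u = 0) : w = 0 := by
  have hw : g.innerRight w = 0 := LinearMap.ext_on hs h
  exact g.definite w (LinearMap.congr_fun hw w)

end Gramian

section Linearisation

variable {Z : Type*} [AddCommGroup Z] [Module ℂ Z] [StarAddMonoid Z] [StarModule ℂ Z]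
  {O : StarCone Z} {H : Type*} [AddCommGroup H] [Module ℂ H] {gH : Gramian O H}
  {K : Type*} [AddCommGroup K] [Module ℂ K] {gK : Gramian O K}
  {X : Type*} {V : X → (H →ₗ[ℂ] K)} {Vadj : X → (K →ₗ[ℂ] H)}

theorem eq_zero_of_forall_adjoint_apply_eq_zero
    (hV : ∀ (x : X) (e : H) (f : K), gK.inner (V x e) f = gH.inner e (Vadj x f))
    (hmin : Submodule.span ℂ {v : K | ∃ (x : X) (h : H), V x h = v} = ⊤)
    {w : K} (hw : ∀ x, Vadj x w = 0) : w = 0 := by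
  refine gK.eq_zero_of_inner_eq_zero_of_span_eq_top hmin ?_
  rintro _ ⟨x, e, rfl⟩
  rw [gK.conj_symm, hV, hw, gH.inner_zero_right, star_zero]

theorem linearMap_ext_of_forall_adjoint_comp_eq {M : Type*} [AddCommGroup M] [Module ℂ M]
    (hV : ∀ (x : X) (e : H) (f : K), gK.inner (V x e) f = gH.inner e (Vadj x f))
    (hmin : Submodule.span ℂ {v : K | ∃ (x : X) (h : H), V x h = v} = ⊤)
    {S T : M →ₗ[ℂ] K} (h : ∀ x, (Vadj x).comp S = (Vadj x).comp T) : S = T := by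
  ext m
  refine sub_eq_zero.mp (eq_zero_of_forall_adjoint_apply_eq_zero hV hmin fun x => ?_)
  rw [map_sub, sub_eq_zero]
  exact LinearMap.congr_fun (h x) m

end Linearisation

theorem minimal_invariant_linearisation_additive_general
    {Z : Type*} [AddCommGroup Z] [Module ℂ Z] [StarAddMonoid Z] [StarModule ℂ Z]
    (O : StarCone Z)
    {H : Type*} [AddCommGroup H] [Module ℂ H] (gH : Gramian O H)
    {Γ : Type*}
    {X : Type*}
    (act : Γ → X → X)
    (k : X → X → (H →ₗ[ℂ] H))
    (α β γ : Γ)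
    (hsum : ∀ x y : X, k y (act α x) + k y (act β x) = k y (act γ x))
    {K : Type*} [AddCommGroup K] [Module ℂ K] (gK : Gramian O K)
    (V : X → (H →ₗ[ℂ] K)) (Vadj : X → (K →ₗ[ℂ] H)) (π : Γ → (K →ₗ[ℂ] K))
    -- `(K, V)` is a VE-space linearisation of `k`
    (hV : ∀ (x : X) (e : H) (f : K), gK.inner (V x e) f = gH.inner e (Vadj x f))
    (hk : ∀ (x y : X) (h : H), k x y h = Vadj x (V y h))
    -- `π` and `V` are related by `V(ξ·x) = π(ξ) V(x)`
    (hπV : ∀ (ξ : Γ) (x : X) (h : H), V (act ξ x) h = π ξ (V x h))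
    -- minimality
    (hmin : Submodule.span ℂ {v : K | ∃ (x : X) (h : H), V x h = v} = ⊤) :
    π α + π β = π γ := by
  have hVsum : ∀ x, V (act α x) + V (act β x) = V (act γ x) := fun x =>
    linearMap_ext_of_forall_adjoint_comp_eq hV hmin fun y => by
      ext h
      simpa only [LinearMap.comp_add, LinearMap.add_apply, LinearMap.comp_apply, hk]
        using LinearMap.congr_fun (hsum x y) h
  refine LinearMap.ext_on hmin ?_
  rintro _ ⟨x, h, rfl⟩
  simpa only [LinearMap.add_apply, hπV] using LinearMap.congr_fun (hVsum x) h

/-- if a `Γ`-invariant kernel `k` satisfies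
`k(y, α·x) + k(y, β·x) = k(y, γ·x)` for all `x, y`, then any minimal `Γ`-invariant
VE-space linearisation `(K, π, V)` of `k` satisfies `π(α) + π(β) = π(γ)`. -/
theorem minimal_invariant_linearisation_additive
    {Z : Type*} [AddCommGroup Z] [Module ℂ Z] [StarAddMonoid Z] [StarModule ℂ Z]
    (O : StarCone Z)
    {H : Type*} [AddCommGroup H] [Module ℂ H] (gH : Gramian O H)
    {Γ : Type*} [Semigroup Γ] [StarMul Γ]
    {X : Type*} [Nonempty X]
    (act : Γ → X → X)
    (hact : ∀ (ξ η : Γ) (x : X), act ξ (act η x) = act (ξ * η) x)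
    (k : X → X → (H →ₗ[ℂ] H))
    (hadj : ∀ x y : X, Adjointable gH gH (k x y))
    (hinv : ∀ (ξ : Γ) (x y : X), k y (act ξ x) = k (act (star ξ) y) x)
    (α β γ : Γ)
    (hsum : ∀ x y : X, k y (act α x) + k y (act β x) = k y (act γ x))
    {K : Type*} [AddCommGroup K] [Module ℂ K] (gK : Gramian O K)
    (V : X → (H →ₗ[ℂ] K)) (Vadj : X → (K →ₗ[ℂ] H)) (π : Γ → (K →ₗ[ℂ] K))
    -- `(K, V)` is a VE-space linearisation of `k`
    (hV : ∀ (x : X) (e : H) (f : K), gK.inner (V x e) f = gH.inner e (Vadj x f))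
    (hk : ∀ (x y : X) (h : H), k x y h = Vadj x (V y h))
    -- `π` is a `*`-representation: multiplicative with `π(ξ*) = π(ξ)*`
    (hπmul : ∀ ξ η : Γ, π (ξ * η) = (π ξ).comp (π η))
    (hπstar : ∀ (ξ : Γ) (f g : K), gK.inner (π ξ f) g = gK.inner f (π (star ξ) g))
    -- `π` and `V` are related by `V(ξ·x) = π(ξ) V(x)`
    (hπV : ∀ (ξ : Γ) (x : X) (h : H), V (act ξ x) h = π ξ (V x h))
    -- minimality
    (hmin : Submodule.span ℂ {v : K | ∃ (x : X) (h : H), V x h = v} = ⊤) :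
    π α + π β = π γ :=
  minimal_invariant_linearisation_additive_general O gH act k α β γ hsum gK V Vadj π hV hk hπV hmin
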